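/- arXiv:1702.07175 — 2 statements merged into one kernel-verified Lean document; each statement's English description precedes it below -/
import Mathlib

section
/- Let (X,d,μ) be a proper metric measure space satisfying the δ-annular decay property for some δ ∈ (0,1], and ϱ a continuous admissible radius function on a bounded domain Ω with concave modulus of continuity ω̂ satisfying max{t, ω_ϱ(t)} ≤ ω̂(t). Then there is a constant C = C(D_δ, μ) > 0 such that for every compact K ⊆ Ω and all x, y ∈ K, μ(B_x △ B_y)/max{μ(B_x),μ(B_y)} ≤ C (ω̂(d(x,y))/ϱ_K)^δ. -/
/-!
Put `d = d(x,y)` and `t = ω̂(d) / ϱ_K`. If `d < ϱ_K`, the ball `B(x, min (ϱ(x), ϱ(y) - d))` lies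
in `B_y`, so `B_x \ B_y` sits in an annulus of `B_x` of relative width at most
`(ϱ(x) - ϱ(y) + d) / ϱ(x) ≤ 2 ω̂(d) / ϱ_K` (as `d ≤ ω̂(d)`). Annular decay and `2^δ ≤ 2` bound its
measure by `2 D_δ t^δ μ(B_x)`, and symmetrically for `B_y \ B_x`. If `d ≥ ϱ_K`, then `t ≥ 1` and
the trivial bound `μ(B_x △ B_y) ≤ 2 max (μ B_x, μ B_y)` suffices.
-/

open MeasureTheory Metric Set

section AnnularDecay

variable {X : Type*} [PseudoMetricSpace X] [MeasurableSpace X]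

def HasAnnularDecay (μ : Measure X) (δ D : ℝ) : Prop :=
  ∀ (x : X) (r R : ℝ), 0 < r → r ≤ R →
    μ (closedBall x R \ closedBall x r) ≤
      ENNReal.ofReal (D * ((R - r) / R) ^ δ) * μ (closedBall x R)

namespace HasAnnularDecay

variable {μ : Measure X} {δ D : ℝ}

theorem measure_closedBall_diff_closedBall_le (h : HasAnnularDecay μ δ D) (hδ : 0 ≤ δ)
    (hD : 0 ≤ D) {a b : X} {ra rb s : ℝ} (hra : 0 < ra) (hab : dist a b < rb)
    (hs : ra - rb + dist a b ≤ s) (hs0 : 0 ≤ s) :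
    μ (closedBall a ra \ closedBall b rb) ≤
      ENNReal.ofReal (D * (s / ra) ^ δ) * μ (closedBall a ra) := by
  set r := min ra (rb - dist a b)
  have hr : 0 < r := lt_min hra (by linarith)
  have hinner : closedBall a r ⊆ closedBall b rb :=
    closedBall_subset_closedBall' (by linarith [min_le_right ra (rb - dist a b)])
  have hwidth : ra - s ≤ r := le_min (by linarith) (by linarith)
  calc μ (closedBall a ra \ closedBall b rb)
      ≤ μ (closedBall a ra \ closedBall a r) := measure_mono (sdiff_subset_sdiff_right hinner)
    _ ≤ ENNReal.ofReal (D * ((ra - r) / ra) ^ δ) * μ (closedBall a ra) :=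
        h a r ra hr (min_le_left _ _)
    _ ≤ ENNReal.ofReal (D * (s / ra) ^ δ) * μ (closedBall a ra) := by
        have : 0 ≤ ra - r := by linarith [min_le_left ra (rb - dist a b)]
        gcongr
        linarith

theorem measure_closedBall_diff_closedBall_le_of_abs_sub_le (h : HasAnnularDecay μ δ D)
    (hδ : 0 ≤ δ) (hδ1 : δ ≤ 1) (hD : 0 ≤ D) {a b : X} {ra rb ρ w : ℝ} (hρ : 0 < ρ)
    (hρa : ρ ≤ ra) (hab : dist a b < rb) (hdw : dist a b ≤ w) (hrw : |ra - rb| ≤ w) :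
    μ (closedBall a ra \ closedBall b rb) ≤
      ENNReal.ofReal (2 * D * (w / ρ) ^ δ) * μ (closedBall a ra) := by
  have hw : 0 ≤ w := (abs_nonneg _).trans hrw
  have hra : 0 < ra := hρ.trans_le hρa
  refine (h.measure_closedBall_diff_closedBall_le hδ hD hra hab
    (s := 2 * w) (by linarith [le_of_abs_le hrw]) (by positivity)).trans ?_
  gcongr ENNReal.ofReal ?_ * _
  calc D * (2 * w / ra) ^ δ ≤ D * (2 * w / ρ) ^ δ := by gcongr
    _ = D * (2 ^ δ * (w / ρ) ^ δ) := by
        rw [mul_div_assoc, Real.mul_rpow zero_le_two (by positivity)]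
    _ ≤ D * (2 * (w / ρ) ^ δ) := by
        gcongr
        simpa using Real.rpow_le_rpow_of_exponent_le one_le_two hδ1
    _ = 2 * D * (w / ρ) ^ δ := by ring

end HasAnnularDecay

end AnnularDecay

theorem toReal_measure_symmDiff_div_max_le {α : Type*} [MeasurableSpace α] {μ : Measure α}
    {A B : Set α} {c : ℝ} (hA : μ A ≠ ⊤) (hB : μ B ≠ ⊤) (hc : 0 ≤ c)
    (hAB : μ (A \ B) ≤ ENNReal.ofReal c * μ A) (hBA : μ (B \ A) ≤ ENNReal.ofReal c * μ B) :
    (μ (symmDiff A B)).toReal / max (μ A).toReal (μ B).toReal ≤ 2 * c := by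
  have hsum : μ (symmDiff A B) ≤ ENNReal.ofReal c * μ A + ENNReal.ofReal c * μ B :=
    (measure_union_le _ _).trans (add_le_add hAB hBA)
  have hreal : (μ (symmDiff A B)).toReal ≤ c * (μ A).toReal + c * (μ B).toReal := by
    have := ENNReal.toReal_mono (by finiteness) hsum
    rwa [ENNReal.toReal_add (by finiteness) (by finiteness), ENNReal.toReal_mul,
      ENNReal.toReal_mul, ENNReal.toReal_ofReal hc] at this
  refine div_le_of_le_mul₀ (le_max_of_le_left ENNReal.toReal_nonneg) (by positivity) ?_
  nlinarith [le_max_left (μ A).toReal (μ B).toReal, le_max_right (μ A).toReal (μ B).toReal]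

theorem measure_symmDiff_ratio_le_of_continuous_radius_general
    {X : Type*} [MetricSpace X] [MeasurableSpace X] (μ : Measure X)
    (δ Dδ : ℝ) (hδ : 0 < δ) (hδ1 : δ ≤ 1) (hDδ : 1 ≤ Dδ)
    (hballs : ∀ (x : X) (r : ℝ), 0 < r → 0 < μ (closedBall x r) ∧ μ (closedBall x r) < ⊤)
    (hAD : ∀ (x : X) (r R : ℝ), 0 < r → r ≤ R →
      μ (closedBall x R \ closedBall x r) ≤
        ENNReal.ofReal (Dδ * (((R - r) / R) ^ δ)) * μ (closedBall x R))
    (Ω : Set X) (hΩbdd : Bornology.IsBounded Ω)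
    (ϱ : X → ℝ) (hϱcont : ContinuousOn ϱ (closure Ω))
    (hadm : ∀ x ∈ Ω, 0 < ϱ x ∧ ϱ x ≤ infDist x (frontier Ω))
    (ωhat : ℝ → ℝ)
    (hge : ∀ t ∈ Set.Icc 0 (Metric.diam Ω), t ≤ ωhat t)
    (hmod : ∀ x ∈ Ω, ∀ y ∈ Ω, |ϱ x - ϱ y| ≤ ωhat (dist x y)) :
    ∃ C > 0, ∀ (K : Set X), IsCompact K → K ⊆ Ω → ∀ x ∈ K, ∀ y ∈ K,
      (μ (symmDiff (closedBall x (ϱ x)) (closedBall y (ϱ y)))).toReal /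
          max (μ (closedBall x (ϱ x))).toReal (μ (closedBall y (ϱ y))).toReal ≤
        C * (ωhat (dist x y) / sInf (ϱ '' K)) ^ δ := by
  have hdecay : HasAnnularDecay μ δ Dδ := hAD
  refine ⟨4 * Dδ, by positivity, fun K hK hKΩ x hx y hy => ?_⟩
  have hpos : ∀ z ∈ K, 0 < ϱ z := fun z hz => (hadm z (hKΩ hz)).1
  have hfin : ∀ z ∈ K, μ (closedBall z (ϱ z)) ≠ ⊤ := fun z hz =>
    (hballs z _ (hpos z hz)).2.ne
  obtain ⟨z, hz, hρK_eq, hz_min⟩ :=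
    hK.exists_sInf_image_eq_and_le ⟨x, hx⟩ (hϱcont.mono (hKΩ.trans subset_closure))
  have hρK : 0 < sInf (ϱ '' K) := hρK_eq ▸ hpos z hz
  have hρK_le : ∀ w ∈ K, sInf (ϱ '' K) ≤ ϱ w := hρK_eq ▸ hz_min
  have hdω : ∀ a ∈ K, ∀ b ∈ K, dist a b ≤ ωhat (dist a b) := fun a ha b hb =>
    hge _ ⟨dist_nonneg, dist_le_diam_of_mem hΩbdd (hKΩ ha) (hKΩ hb)⟩
  set t := (ωhat (dist x y) / sInf (ϱ '' K)) ^ δ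
  have ht : 0 ≤ t := by
    have := dist_nonneg.trans (hdω x hx y hy)
    positivity
  rcases lt_or_ge (dist x y) (sInf (ϱ '' K)) with hnear | hfar
  · have hxy := hdecay.measure_closedBall_diff_closedBall_le_of_abs_sub_le hδ.le hδ1 (by linarith)
      hρK (hρK_le x hx) (hnear.trans_le (hρK_le y hy)) (hdω x hx y hy)
      (hmod x (hKΩ hx) y (hKΩ hy))
    have hyx := hdecay.measure_closedBall_diff_closedBall_le_of_abs_sub_le hδ.le hδ1 (by linarith)
      hρK (hρK_le y hy) ((dist_comm y x).trans_lt (hnear.trans_le (hρK_le x hx)))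
      (hdω y hy x hx) (hmod y (hKΩ hy) x (hKΩ hx))
    rw [dist_comm y x] at hyx
    calc _ ≤ 2 * (2 * Dδ * t) :=
          toReal_measure_symmDiff_div_max_le (hfin x hx) (hfin y hy)
            (mul_nonneg (by linarith) ht) hxy hyx
      _ = 4 * Dδ * t := by ring
  · have ht1 : 1 ≤ t :=
      Real.one_le_rpow ((one_le_div hρK).2 (hfar.trans (hdω x hx y hy))) hδ.le
    calc _ ≤ 2 * 1 :=
          toReal_measure_symmDiff_div_max_le (hfin x hx) (hfin y hy) zero_le_one
            (by simpa using measure_mono sdiff_subset) (by simpa using measure_mono sdiff_subset)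
      _ ≤ 4 * Dδ * t := by nlinarith

theorem measure_symmDiff_ratio_le_of_continuous_radius
    {X : Type*} [MetricSpace X] [ProperSpace X] [MeasurableSpace X] (μ : Measure X)
    (δ Dδ : ℝ) (hδ : 0 < δ) (hδ1 : δ ≤ 1) (hDδ : 1 ≤ Dδ)
    (hballs : ∀ (x : X) (r : ℝ), 0 < r → 0 < μ (closedBall x r) ∧ μ (closedBall x r) < ⊤)
    (hAD : ∀ (x : X) (r R : ℝ), 0 < r → r ≤ R →
      μ (closedBall x R \ closedBall x r) ≤
        ENNReal.ofReal (Dδ * (((R - r) / R) ^ δ)) * μ (closedBall x R))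
    (Ω : Set X) (hΩopen : IsOpen Ω) (hΩbdd : Bornology.IsBounded Ω)
    (ϱ : X → ℝ) (hϱcont : ContinuousOn ϱ (closure Ω))
    (hadm : ∀ x ∈ Ω, 0 < ϱ x ∧ ϱ x ≤ infDist x (frontier Ω))
    (hϱ0 : ∀ x ∈ frontier Ω, ϱ x = 0)
    (ωhat : ℝ → ℝ)
    (hconc : ConcaveOn ℝ (Set.Icc 0 (Metric.diam Ω)) ωhat)
    (hmono : MonotoneOn ωhat (Set.Icc 0 (Metric.diam Ω)))
    (hcont : ContinuousOn ωhat (Set.Icc 0 (Metric.diam Ω)))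
    (h0 : ωhat 0 = 0)
    (hge : ∀ t ∈ Set.Icc 0 (Metric.diam Ω), t ≤ ωhat t)
    (hmod : ∀ x ∈ Ω, ∀ y ∈ Ω, |ϱ x - ϱ y| ≤ ωhat (dist x y)) :
    ∃ C > 0, ∀ (K : Set X), IsCompact K → K ⊆ Ω → ∀ x ∈ K, ∀ y ∈ K,
      (μ (symmDiff (closedBall x (ϱ x)) (closedBall y (ϱ y)))).toReal /
          max (μ (closedBall x (ϱ x))).toReal (μ (closedBall y (ϱ y))).toReal ≤
        C * (ωhat (dist x y) / sInf (ϱ '' K)) ^ δ :=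
  measure_symmDiff_ratio_le_of_continuous_radius_general μ δ Dδ hδ hδ1 hDδ hballs hAD Ω hΩbdd ϱ
    hϱcont hadm ωhat hge hmod
end

section
/- Let (X,d) be a geodesic metric space, Ω a bounded domain, ϱ a continuous admissible radius function with concave modulus of continuity ω̂ satisfying ω̂(t) ≥ max{t, |ϱ(x)−ϱ(y)| when d(x,y)=t}. Then for any u continuous on the closure of Ω, any compact K ⊆ Ω, and all x, y ∈ K: |S u(x) − S u(y)| ≤ ω_{u,K̃}(ω̂(d(x,y))), where S u(x) = (sup_{B_x} u + inf_{B_x} u)/2, K̃ = ∪_{x∈K} B_x, and ω_{u,K̃} is a concave modulus of continuity of u on K̃. -/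
/-!
Fix `x, y ∈ K`, let `d = d(x,y)` and `H = ω̂(d)`, so that `d ≤ H` and `|ϱ x - ϱ y| ≤ H`.
For `p ∈ B_x` and `q ∈ B_y`, the geodesic property provides `a ∈ B_y` with
`d(p,a) ≤ (ϱ x + d - ϱ y)⁺` and `b ∈ B_x` with `d(q,b) ≤ (ϱ y + d - ϱ x)⁺`; these two bounds add
up to at most `2H`, so concavity of `ω` gives
`u p + u b ≤ u a + u q + ω(d(p,a)) + ω(d(q,b)) ≤ sup_{B_y} u + u q + 2 ω(H)`.
Since `inf_{B_x} u ≤ u b`, taking the supremum over `p` and the infimum over `q` yields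
`2 S u(x) ≤ 2 S u(y) + 2 ω(H)`; exchanging `x` and `y` gives the theorem.
-/

open Metric Set

/-- The mid-range operator `S u (x) = (sup_{B_x} u + inf_{B_x} u) / 2`. -/
noncomputable def midOp {X : Type*} [MetricSpace X] (ϱ : X → ℝ) (u : X → ℝ) : X → ℝ :=
  fun x => (sSup (u '' Metric.closedBall x (ϱ x)) + sInf (u '' Metric.closedBall x (ϱ x))) / 2

/-- Implied by `X` being geodesic: points at every intermediate distance exist. -/
def HasIntermediatePoints (X : Type*) [MetricSpace X] : Prop :=
  ∀ x y : X, ∀ s : ℝ, 0 ≤ s → s ≤ dist x y → ∃ z : X, dist x z = s ∧ dist z y = dist x y - s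

theorem HasIntermediatePoints.exists_mem_closedBall_dist_le {X : Type*} [MetricSpace X]
    (hX : HasIntermediatePoints X) (p c : X) {r : ℝ} (hr : 0 ≤ r) :
    ∃ a ∈ closedBall c r, dist p a ≤ max (dist p c - r) 0 := by
  rcases le_or_gt (dist p c) r with hpc | hpc
  · exact ⟨p, hpc, by simp⟩
  · obtain ⟨z, hpz, hzc⟩ := hX p c (dist p c - r) (by linarith) (by linarith)
    exact ⟨z, by rw [mem_closedBall, hzc]; linarith, hpz.le.trans (le_max_left _ _)⟩

theorem HasIntermediatePoints.exists_mem_closedBall_dist_le_of_mem_closedBall {X : Type*}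
    [MetricSpace X] (hX : HasIntermediatePoints X) {p x : X} {r : ℝ} (hp : p ∈ closedBall x r)
    (y : X) {r' : ℝ} (hr' : 0 ≤ r') :
    ∃ a ∈ closedBall y r', dist p a ≤ max (r + dist x y - r') 0 := by
  obtain ⟨a, ha, hpa⟩ := hX.exists_mem_closedBall_dist_le p y hr'
  refine ⟨a, ha, hpa.trans (max_le_max_right _ ?_)⟩
  linarith [dist_triangle p x y, mem_closedBall.mp hp]

theorem ConcaveOn.add_le_two_mul_of_add_le {ω : ℝ → ℝ} (hconc : ConcaveOn ℝ (Ici 0) ω)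
    (hmono : MonotoneOn ω (Ici 0)) {s t H : ℝ} (hs : 0 ≤ s) (ht : 0 ≤ t) (hst : s + t ≤ 2 * H) :
    ω s + ω t ≤ 2 * ω H := by
  have hmid := hconc.2 (mem_Ici.2 hs) (mem_Ici.2 ht) (by norm_num : (0 : ℝ) ≤ 1 / 2)
    (by norm_num : (0 : ℝ) ≤ 1 / 2) (by norm_num)
  have hmidH : ω ((1 / 2 : ℝ) * s + (1 / 2 : ℝ) * t) ≤ ω H :=
    hmono (mem_Ici.2 (by positivity)) (mem_Ici.2 (by linarith)) (by linarith)
  simp only [smul_eq_mul] at hmid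
  linarith

theorem sSup_add_sInf_le_of_forall_exists {A B : Set ℝ} {c : ℝ} (hA : A.Nonempty)
    (hAb : BddBelow A) (hB : B.Nonempty) (hBa : BddAbove B)
    (h : ∀ v ∈ A, ∀ w ∈ B, ∃ a ∈ B, ∃ b ∈ A, v - a + b - w ≤ c) :
    sSup A + sInf A ≤ sSup B + sInf B + c := by
  suffices hsup : sSup A ≤ sSup B + sInf B + c - sInf A by linarith
  refine csSup_le hA fun v hv => ?_
  suffices hinf : v + sInf A - sSup B - c ≤ sInf B by linarith
  refine le_csInf hB fun w hw => ?_
  obtain ⟨a, ha, b, hb, hab⟩ := h v hv w hw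
  linarith [le_csSup hBa ha, csInf_le hAb hb]

theorem isBounded_image_of_forall_abs_sub_le {X : Type*} {u : X → ℝ} {S : Set X} {x : X} {M : ℝ}
    (h : ∀ s ∈ S, |u s - u x| ≤ M) : Bornology.IsBounded (u '' S) :=
  (isBounded_iff_subset_closedBall (u x)).2
    ⟨M, by rintro _ ⟨s, hs, rfl⟩; exact mem_closedBall.2 (Real.dist_eq _ _ ▸ h s hs)⟩

section Modulus

variable {X : Type*} [MetricSpace X] {u : X → ℝ} {ω : ℝ → ℝ} {T : Set X}

theorem isBounded_image_closedBall_of_modulus (hmono : MonotoneOn ω (Ici 0))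
    (hmod : ∀ s ∈ T, ∀ t ∈ T, |u s - u t| ≤ ω (dist s t)) {x : X} {r : ℝ} (hr : 0 ≤ r)
    (hxT : closedBall x r ⊆ T) : Bornology.IsBounded (u '' closedBall x r) :=
  isBounded_image_of_forall_abs_sub_le fun s hs =>
    (hmod s (hxT hs) x (hxT (mem_closedBall_self hr))).trans
      (hmono (mem_Ici.2 dist_nonneg) (mem_Ici.2 hr) hs)

theorem midOp_sub_le_of_modulus (hX : HasIntermediatePoints X) (hconc : ConcaveOn ℝ (Ici 0) ω)
    (hmono : MonotoneOn ω (Ici 0)) (hmod : ∀ s ∈ T, ∀ t ∈ T, |u s - u t| ≤ ω (dist s t))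
    {ϱ : X → ℝ} {x y : X} (hϱx : 0 ≤ ϱ x) (hϱy : 0 ≤ ϱ y) (hxT : closedBall x (ϱ x) ⊆ T)
    (hyT : closedBall y (ϱ y) ⊆ T) {H : ℝ} (hdH : dist x y ≤ H) (hϱH : |ϱ x - ϱ y| ≤ H) :
    midOp ϱ u x - midOp ϱ u y ≤ ω H := by
  have hA := isBounded_image_closedBall_of_modulus hmono hmod hϱx hxT
  have hB := isBounded_image_closedBall_of_modulus hmono hmod hϱy hyT
  suffices hsum : sSup (u '' closedBall x (ϱ x)) + sInf (u '' closedBall x (ϱ x)) ≤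
      sSup (u '' closedBall y (ϱ y)) + sInf (u '' closedBall y (ϱ y)) + 2 * ω H by
    simp only [midOp]; linarith
  refine sSup_add_sInf_le_of_forall_exists ((nonempty_closedBall.2 hϱx).image u) hA.bddBelow
    ((nonempty_closedBall.2 hϱy).image u) hB.bddAbove ?_
  rintro _ ⟨p, hp, rfl⟩ _ ⟨q, hq, rfl⟩
  obtain ⟨a, ha, hpa⟩ := hX.exists_mem_closedBall_dist_le_of_mem_closedBall hp y hϱy
  obtain ⟨b, hb, hqb⟩ := hX.exists_mem_closedBall_dist_le_of_mem_closedBall hq x hϱx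
  rw [dist_comm y x] at hqb
  have hdist : dist p a + dist q b ≤ 2 * H := by
    obtain ⟨h₁, h₂⟩ := abs_le.mp hϱH
    rcases max_cases (ϱ x + dist x y - ϱ y) 0 with ⟨e, -⟩ | ⟨e, -⟩ <;>
    rcases max_cases (ϱ y + dist x y - ϱ x) 0 with ⟨f, -⟩ | ⟨f, -⟩ <;>
    linarith
  have hpa' : u p - u a ≤ ω (dist p a) := (le_abs_self _).trans (hmod p (hxT hp) a (hyT ha))
  have hqb' : u b - u q ≤ ω (dist q b) :=
    (le_abs_self _).trans (dist_comm q b ▸ hmod b (hxT hb) q (hyT hq))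
  refine ⟨u a, mem_image_of_mem u ha, u b, mem_image_of_mem u hb, ?_⟩
  linarith [hconc.add_le_two_mul_of_add_le hmono dist_nonneg dist_nonneg hdist]

end Modulus

theorem midOp_modulus_estimate_general
    {X : Type*} [MetricSpace X]
    (hgeo : ∀ x y : X, ∀ s : ℝ, 0 ≤ s → s ≤ dist x y →
      ∃ z : X, dist x z = s ∧ dist z y = dist x y - s)
    (Ω : Set X)
    (ϱ : X → ℝ)
    (hadm : ∀ x ∈ Ω, 0 < ϱ x ∧ ϱ x ≤ infDist x (frontier Ω))
    (ωhat : ℝ → ℝ)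
    (hhge : ∀ t : ℝ, 0 ≤ t → t ≤ ωhat t)
    (hhmod : ∀ x ∈ Ω, ∀ y ∈ Ω, |ϱ x - ϱ y| ≤ ωhat (dist x y))
    (u : X → ℝ)
    (K : Set X) (hKΩ : K ⊆ Ω)
    (ω : ℝ → ℝ)
    (hconc : ConcaveOn ℝ (Set.Ici 0) ω) (hmono : MonotoneOn ω (Set.Ici 0))
    (hmod : ∀ s ∈ ⋃ x ∈ K, closedBall x (ϱ x), ∀ t ∈ ⋃ x ∈ K, closedBall x (ϱ x),
      |u s - u t| ≤ ω (dist s t)) :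
    ∀ x ∈ K, ∀ y ∈ K, |midOp ϱ u x - midOp ϱ u y| ≤ ω (ωhat (dist x y)) := by
  have hϱ : ∀ x ∈ K, 0 ≤ ϱ x := fun x hx => (hadm x (hKΩ hx)).1.le
  have hball : ∀ x ∈ K, closedBall x (ϱ x) ⊆ ⋃ z ∈ K, closedBall z (ϱ z) :=
    fun x hx => subset_biUnion_of_mem (u := fun z => closedBall z (ϱ z)) hx
  have hone_sided : ∀ x ∈ K, ∀ y ∈ K, midOp ϱ u x - midOp ϱ u y ≤ ω (ωhat (dist x y)) :=
    fun x hx y hy => midOp_sub_le_of_modulus hgeo hconc hmono hmod (hϱ x hx) (hϱ y hy)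
      (hball x hx) (hball y hy) (hhge _ dist_nonneg) (hhmod x (hKΩ hx) y (hKΩ hy))
  intro x hx y hy
  rw [abs_sub_le_iff]
  exact ⟨hone_sided x hx y hy, dist_comm x y ▸ hone_sided y hy x hx⟩

theorem midOp_modulus_estimate
    {X : Type*} [MetricSpace X]
    (hgeo : ∀ x y : X, ∀ s : ℝ, 0 ≤ s → s ≤ dist x y →
      ∃ z : X, dist x z = s ∧ dist z y = dist x y - s)
    (Ω : Set X) (hΩopen : IsOpen Ω) (hΩbdd : Bornology.IsBounded Ω)
    (ϱ : X → ℝ) (hϱcont : ContinuousOn ϱ (closure Ω))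
    (hadm : ∀ x ∈ Ω, 0 < ϱ x ∧ ϱ x ≤ infDist x (frontier Ω))
    (hϱ0 : ∀ x ∈ frontier Ω, ϱ x = 0)
    (ωhat : ℝ → ℝ)
    (hhconc : ConcaveOn ℝ (Set.Ici 0) ωhat) (hhmono : MonotoneOn ωhat (Set.Ici 0))
    (hhcont : ContinuousOn ωhat (Set.Ici 0)) (hh0 : ωhat 0 = 0)
    (hhge : ∀ t : ℝ, 0 ≤ t → t ≤ ωhat t)
    (hhmod : ∀ x ∈ Ω, ∀ y ∈ Ω, |ϱ x - ϱ y| ≤ ωhat (dist x y))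
    (u : X → ℝ) (hu : ContinuousOn u (closure Ω))
    (K : Set X) (hK : IsCompact K) (hKΩ : K ⊆ Ω)
    (ω : ℝ → ℝ)
    (hconc : ConcaveOn ℝ (Set.Ici 0) ω) (hmono : MonotoneOn ω (Set.Ici 0))
    (hcont : ContinuousOn ω (Set.Ici 0)) (h0 : ω 0 = 0)
    (hmod : ∀ s ∈ ⋃ x ∈ K, closedBall x (ϱ x), ∀ t ∈ ⋃ x ∈ K, closedBall x (ϱ x),
      |u s - u t| ≤ ω (dist s t)) :
    ∀ x ∈ K, ∀ y ∈ K, |midOp ϱ u x - midOp ϱ u y| ≤ ω (ωhat (dist x y)) :=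
  midOp_modulus_estimate_general hgeo Ω ϱ hadm ωhat hhge hhmod u K hKΩ ω hconc hmono hmod
end
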